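/- Decode correctness of merge: let T be a type symbol with c = c(T) constructors, let f⃗ be a list of formulas, let a_1,…,a_c be abstract values, and let σ be an assignment such that the bit string obtained by evaluating f⃗ under σ has a prefix in S_c with numeric_c of that string equal to k. If decode_T(a_k, σ) is defined, then decode_T(merge_c(f⃗, a_1,…,a_c), σ) is defined and equals decode_T(a_k, σ). -/

import Mathlib

/-- Abstract values over propositional variables `V`: a list of (semantic) formulas
(the *flags*) together with a list of abstract values (the *arguments*). -/
inductive AVal (V : Type) : Type where
  | mk : List ((V → Bool) → Bool) → List (AVal V) → AVal V

/-- The flags of an abstract value. -/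
def AVal.flags {V : Type} : AVal V → List ((V → Bool) → Bool)
  | .mk f _ => f

/-- The arguments of an abstract value. -/
def AVal.args {V : Type} : AVal V → List (AVal V)
  | .mk _ a => a

/-- A signature: every type symbol `T` gets a nonempty finite list of constructors,
each given by its finite list of argument type symbols. -/
structure Signature (τ : Type) where
  ctors : τ → List (List τ)
  ctors_ne : ∀ T, ctors T ≠ []

/-- Untyped data terms; the first component is the (1-based) rank of the
constructor. -/
inductive Value : Type where
  | mk : ℕ → List Value → Value

/-- Well-typed concrete values of type `T`: `C_i(v_1, …, v_n)` where `C_i` is the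
`i`-th constructor of `T` with argument types `T_1, …, T_n` and each `v_j` is a
well-typed value of type `T_j`. -/
inductive WT {τ : Type} (sig : Signature τ) : τ → Value → Prop where
  | mk {T : τ} {i : ℕ} {argTys : List τ} {vals : List Value} :
      1 ≤ i → (sig.ctors T)[i - 1]? = some argTys →
      List.Forall₂ (WT sig) argTys vals → WT sig T (.mk i vals)

/-- `numeric n w = some i` iff `w` has a (unique) prefix `u ∈ S n` of lexicographic
rank `i` in `S n`; extra bits beyond the prefix are ignored. -/
def numeric : ℕ → List Bool → Option ℕ
  | 0, _ => none
  | 1, _ => some 1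
  | _ + 2, [] => none
  | n + 2, false :: w => numeric ((n + 2 + 1) / 2) w
  | n + 2, true :: w => (numeric ((n + 2) / 2) w).map (fun i => (n + 2 + 1) / 2 + i)
termination_by n _ => n
decreasing_by all_goals omega

/-- `strOf n i` is the element of `S n` of lexicographic rank `i` (for `1 ≤ i ≤ n`). -/
def strOf : ℕ → ℕ → List Bool
  | 0, _ => []
  | 1, _ => []
  | n + 2, i =>
      if i ≤ (n + 2 + 1) / 2 then false :: strOf ((n + 2 + 1) / 2) i
      else true :: strOf ((n + 2) / 2) (i - (n + 2 + 1) / 2)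
termination_by n _ => n
decreasing_by all_goals omega
mutual
  /-- Encoding of a concrete value of type `T` as an abstract value: the flags are
  constant formulas representing the rank-`i` element of `S c(T)`, and the arguments
  are the encodings of the constructor arguments at their respective types. -/
  def encode {V τ : Type} (sig : Signature τ) : τ → Value → AVal V
    | T, .mk i vals =>
        .mk ((strOf (sig.ctors T).length i).map (fun b => fun _ => b))
          (encodeList sig ((sig.ctors T).getD (i - 1) []) vals)
  termination_by _ v => sizeOf v

  /-- Pointwise encoding of a list of values at a list of types. -/
  def encodeList {V τ : Type} (sig : Signature τ) : List τ → List Value → List (AVal V)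
    | t :: ts, v :: vs => encode sig t v :: encodeList sig ts vs
    | _, _ => []
  termination_by _ vs => sizeOf vs
end

mutual
  /-- Decoding of an abstract value at type `T` under an assignment `σ` (a partial
  function): the flags are evaluated under `σ`; if the resulting bit string has a
  prefix in `S c(T)` determining constructor rank `i` of `T`, and there are enough
  arguments, the first arguments are decoded at the argument types of the `i`-th
  constructor of `T`; otherwise decoding is undefined. -/
  def decode {V τ : Type} (sig : Signature τ) : τ → AVal V → (V → Bool) → Option Value
    | T, .mk flags args, σ =>
        match numeric (sig.ctors T).length (flags.map (fun f => f σ)) with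
        | none => none
        | some i =>
            match (sig.ctors T)[i - 1]? with
            | none => none
            | some argTys =>
                if argTys.length ≤ args.length then
                  (decodeList sig argTys args σ).map (Value.mk i)
                else none
  termination_by _ a _ => sizeOf a

  /-- Pointwise decoding of (a prefix of) a list of abstract values at a list of
  types. -/
  def decodeList {V τ : Type} (sig : Signature τ) :
      List τ → List (AVal V) → (V → Bool) → Option (List Value)
    | [], _, _ => some []
    | _ :: _, [], _ => none
    | t :: ts, a :: as, σ =>
        match decode sig t a σ with
        | none => none
        | some v => (decodeList sig ts as σ).map (fun vs => v :: vs)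
  termination_by _ as _ => sizeOf as
end
lemma AVal.one_le_sizeOf_list {V : Type} (l : List (AVal V)) : 1 ≤ sizeOf l := by
  cases l <;> simp <;> omega

lemma AVal.sizeOf_getD_le {V : Type} (a : AVal V) (j : ℕ) :
    sizeOf (a.args.getD j (AVal.mk [] [])) ≤ sizeOf a := by
  cases a with
  | mk f args =>
      simp only [AVal.args]
      by_cases h : j < args.length
      · have hm : args.getD j (AVal.mk [] []) ∈ args := by
          rw [List.getD_eq_getElem _ _ h]; exact List.getElem_mem h
        have := List.sizeOf_lt_of_mem hm
        simp only [AVal.mk.sizeOf_spec]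
        have := AVal.one_le_sizeOf_list (V := V) []
        omega
      · rw [List.getD_eq_default _ _ (by omega)]
        simp only [AVal.mk.sizeOf_spec]
        have h1 : 1 ≤ sizeOf f := by cases f <;> simp <;> omega
        have h2 := AVal.one_le_sizeOf_list args
        have h3 := AVal.one_le_sizeOf_list (V := V) []
        simp at h3 ⊢
        omega

lemma AVal.sizeOf_getD_lt {V : Type} (a : AVal V) (j : ℕ) (h : j < a.args.length) :
    sizeOf (a.args.getD j (AVal.mk [] [])) < sizeOf a := by
  cases a with
  | mk f args =>
      simp only [AVal.args] at h ⊢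
      have hm : args.getD j (AVal.mk [] []) ∈ args := by
        rw [List.getD_eq_getElem _ _ h]; exact List.getElem_mem h
      have := List.sizeOf_lt_of_mem hm
      simp only [AVal.mk.sizeOf_spec]
      omega

lemma merge_dec {V : Type} (as : List (AVal V)) (j : ℕ)
    (hj : j < (as.map (fun a => a.args.length)).foldr max 0) :
    sizeOf (as.map (fun a => a.args.getD j (AVal.mk [] []))) < sizeOf as := by
  induction as with
  | nil => simp at hj
  | cons a as ih =>
      simp only [List.map_cons, List.foldr_cons] at hj
      simp only [List.map_cons, List.cons.sizeOf_spec]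
      rcases Nat.lt_or_ge j a.args.length with h | h
      · have h1 := AVal.sizeOf_getD_lt a j h
        have h2 : sizeOf (as.map (fun a => a.args.getD j (AVal.mk [] []))) ≤ sizeOf as := by
          rcases Nat.lt_or_ge j ((as.map (fun a => a.args.length)).foldr max 0) with h' | h'
          · exact Nat.le_of_lt (ih h')
          · clear ih hj; induction as with
            | nil => simp
            | cons b bs ihb =>
                simp only [List.map_cons, List.foldr_cons] at h' ⊢
                simp only [List.cons.sizeOf_spec]
                have := AVal.sizeOf_getD_le b j
                have := ihb (by omega)
                omega
        omega
      · have hj' : j < (as.map (fun a => a.args.length)).foldr max 0 := by omega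
        have := ih hj'
        have := AVal.sizeOf_getD_le a j
        omega

/-- The combining function `merge c f⃗ [a_1, …, a_c]`: its `i`-th flag is the
conjunction over `k` of the implications `numeric c f⃗ = k ⟹ flags_i(a_k)`, and its
`j`-th argument is `merge c f⃗` of the `j`-th arguments of the `a_k` (a missing
argument being the empty abstract value). -/
def merge {V : Type} (c : ℕ) (fs : List ((V → Bool) → Bool)) (as : List (AVal V)) :
    AVal V :=
  AVal.mk
    ((List.range ((as.map (fun a => a.flags.length)).foldr max 0)).map
      (fun i => fun σ =>
        match numeric c (fs.map (fun f => f σ)) with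
        | none => true
        | some k =>
            match as[k - 1]? with
            | none => true
            | some a =>
                match a.flags[i]? with
                | none => true
                | some g => g σ))
    ((List.range ((as.map (fun a => a.args.length)).foldr max 0)).attach.map
      (fun j => merge c fs (as.map (fun a => a.args.getD j.1 (AVal.mk [] [])))))
termination_by sizeOf as
decreasing_by
  have := merge_dec as j.1 (by simpa using j.2)
  simpa [List.map_attach_eq_pmap, List.pmap_eq_map] using this


/-!
Under `σ` the `i`-th flag of `merge c fs as` evaluates to the `i`-th flag of `a_k`, or to
`true` beyond its length, so the evaluated flags of `a_k` are a prefix of those of the merge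
and `numeric` reads off the same constructor. The arguments of the merge at the positions
that constructor needs are again merges selecting the corresponding arguments of `a_k`, and
well-founded recursion on `a_k` finishes the argument.
-/

lemma numeric_append : ∀ (n : ℕ) (w u : List Bool) (i : ℕ),
    numeric n w = some i → numeric n (w ++ u) = some i
  | 0, w, u, i, h => by simp [numeric] at h
  | 1, w, u, i, h => by simpa [numeric] using h
  | n + 2, [], u, i, h => by simp [numeric] at h
  | n + 2, false :: w, u, i, h => by
      simp only [numeric, List.cons_append] at h ⊢
      exact numeric_append ((n + 2 + 1) / 2) w u i h
  | n + 2, true :: w, u, i, h => by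
      simp only [numeric, List.cons_append, Option.map_eq_some_iff] at h ⊢
      obtain ⟨j, hj, rfl⟩ := h
      exact ⟨j, numeric_append ((n + 2) / 2) w u j hj, rfl⟩
termination_by n => n
decreasing_by all_goals omega

lemma List.IsPrefix.numeric_eq_some {n i : ℕ} {w w' : List Bool} (hw : w <+: w')
    (h : numeric n w = some i) : numeric n w' = some i := by
  obtain ⟨u, rfl⟩ := hw
  exact numeric_append n w u i h

lemma AVal.sizeOf_lt_of_mem_args {V : Type} {a x : AVal V} (hx : x ∈ a.args) :
    sizeOf x < sizeOf a := by
  cases a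
  simp only [AVal.args] at hx
  have := List.sizeOf_lt_of_mem hx
  simp only [AVal.mk.sizeOf_spec]
  omega

section Decode

variable {V τ : Type} (sig : Signature τ) (σ : V → Bool)

lemma decode_eq_some_iff (T : τ) (a : AVal V) (v : Value) :
    decode sig T a σ = some v ↔ ∃ i argTys vs,
      numeric (sig.ctors T).length (a.flags.map (· σ)) = some i ∧
      (sig.ctors T)[i - 1]? = some argTys ∧ argTys.length ≤ a.args.length ∧
      decodeList sig argTys a.args σ = some vs ∧ Value.mk i vs = v := by
  obtain ⟨flags, args⟩ := a
  rw [decode]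
  simp only [AVal.flags, AVal.args]
  split
  · simp_all
  · split
    · simp_all
    · split <;> simp_all

lemma decodeList_eq_some_of_forall {ts : List τ} {xs ys : List (AVal V)} {vs : List Value}
    (hxy : ∀ (j : ℕ) t x, ts[j]? = some t → xs[j]? = some x →
      ∃ y, ys[j]? = some y ∧ ∀ w, decode sig t x σ = some w → decode sig t y σ = some w)
    (h : decodeList sig ts xs σ = some vs) : decodeList sig ts ys σ = some vs := by
  induction ts generalizing xs ys vs with
  | nil => rwa [decodeList] at h ⊢
  | cons t ts ih =>
    obtain _ | ⟨x, xs⟩ := xs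
    · simp [decodeList] at h
    obtain ⟨y, hy, hdecode⟩ := hxy 0 t x rfl rfl
    obtain _ | ⟨y', ys⟩ := ys
    · simp at hy
    obtain rfl : y' = y := by simpa using hy
    rw [decodeList] at h ⊢
    cases hx : decode sig t x σ with
    | none => simp [hx] at h
    | some w =>
      simp only [hx, hdecode w hx, Option.map_eq_some_iff] at h ⊢
      obtain ⟨vs', hvs', rfl⟩ := h
      exact ⟨vs', ih (fun j => hxy (j + 1)) hvs', rfl⟩

end Decode

section Merge

variable {V : Type} (c : ℕ) (fs : List ((V → Bool) → Bool)) (as : List (AVal V))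

lemma flags_merge_prefix {σ : V → Bool} {k : ℕ} {b : AVal V}
    (hk : numeric c (fs.map (· σ)) = some k) (hb : as[k - 1]? = some b) :
    b.flags.map (· σ) <+: (merge c fs as).flags.map (· σ) := by
  have hlen : b.flags.length ≤ (as.map (·.flags.length)).foldr max 0 :=
    List.le_max_of_le' 0 (List.mem_map_of_mem (List.mem_of_getElem? hb)) le_rfl
  rw [List.prefix_iff_eq_take, merge, AVal.flags.eq_1]
  refine List.ext_getElem (by simp [hlen]) fun j hj _ => ?_
  simp only [List.length_map] at hj
  simp [hk, hb, hj]

lemma args_merge : (merge c fs as).args =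
    (List.range ((as.map (·.args.length)).foldr max 0)).map
      fun j => merge c fs (as.map (·.args.getD j (AVal.mk [] []))) := by
  rw [merge]
  simp [AVal.args]

end Merge

theorem decode_merge_eq_some {V τ : Type} (sig : Signature τ) {c k : ℕ}
    {fs : List ((V → Bool) → Bool)} {σ : V → Bool}
    (hk : numeric c (fs.map (· σ)) = some k) (T : τ) (as : List (AVal V)) (b : AVal V)
    (hb : as[k - 1]? = some b) (v : Value) (h : decode sig T b σ = some v) :
    decode sig T (merge c fs as) σ = some v := by
  obtain ⟨i, argTys, vs, hi, hT, hlen, hvs, rfl⟩ := (decode_eq_some_iff sig σ T b v).1 h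
  have hargs : b.args.length ≤ (as.map (·.args.length)).foldr max 0 :=
    List.le_max_of_le' 0 (List.mem_map_of_mem (List.mem_of_getElem? hb)) le_rfl
  refine (decode_eq_some_iff sig σ T _ _).2
    ⟨i, argTys, vs, (flags_merge_prefix c fs as hk hb).numeric_eq_some hi, hT, ?_, ?_, rfl⟩
  · simpa [args_merge] using hlen.trans hargs
  refine decodeList_eq_some_of_forall sig σ (fun j t x _ hx => ?_) hvs
  have hj : j < (as.map (·.args.length)).foldr max 0 :=
    (List.getElem?_eq_some_iff.1 hx).1.trans_le hargs
  refine ⟨merge c fs (as.map (·.args.getD j (AVal.mk [] []))), by simp [args_merge, hj],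
    fun w hw => decode_merge_eq_some sig hk t _ x ?_ w hw⟩
  simp [hb, hx]
termination_by sizeOf b
decreasing_by exact AVal.sizeOf_lt_of_mem_args (List.mem_of_getElem? hx)

/-- Decode correctness of `merge`: let `T` be a type symbol with `c = c(T)`
constructors, and suppose evaluating the flags `fs` under `σ` yields a bit string
with a prefix in `S c` of rank `k`.  If decoding `a_k` at `T` under `σ` is defined,
then decoding `merge c fs [a_1, …, a_c]` at `T` under `σ` is defined and yields the
same concrete value. -/
theorem merge_decode_correct {V τ : Type} (sig : Signature τ) (T : τ)
    (fs : List ((V → Bool) → Bool)) (as : List (AVal V))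
    (hlen : as.length = (sig.ctors T).length)
    (σ : V → Bool) (k : ℕ)
    (hk : numeric (sig.ctors T).length (fs.map (fun f => f σ)) = some k)
    (ak : AVal V) (hak : as[k - 1]? = some ak)
    (v : Value) (h : decode sig T ak σ = some v) :
    decode sig T (merge (sig.ctors T).length fs as) σ = some v :=
  decode_merge_eq_some sig hk T as ak hak v h
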